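/- arXiv:2408.04618 — 3 statements merged into one kernel-verified Lean document; each statement's English description precedes it below -/
import Mathlib

section
/- In every 2-connected finite simple graph G, any two longest cycles share a vertex: if C1 and C2 are cycles of maximum length in G, then V(C1) ∩ V(C2) ≠ ∅. -/
/-!
Suppose two longest cycles `C₁`, `C₂`, of length `L`, were disjoint. Adding to `G` one vertex
joined to all of `V(C₁)` and one joined to all of `V(C₂)` keeps it 2-connected, so by Whitney's
theorem the two new vertices are joined by two internally disjoint paths; trimmed, these give two
disjoint `V(C₁)`–`V(C₂)` paths `P` and `Q`, each with at least one edge. The ends of `P` and `Q`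
cut `C₁` and `C₂` into two arcs each; the longer arc of each has length at least `L / 2`, and the
two longer arcs together with `P` and `Q` form a cycle of length at least `L + 2`.
-/

open SimpleGraph

/-- `c` is a longest cycle in `G`: it is a cycle and its length is at least
the length of every cycle in `G`. -/
def IsLongestCycle {V : Type*} (G : SimpleGraph V) {v : V} (c : G.Walk v v) : Prop :=
  c.IsCycle ∧ ∀ (u : V) (c' : G.Walk u u), c'.IsCycle → c'.length ≤ c.length

namespace SimpleGraph

variable {V : Type*} {G : SimpleGraph V}

namespace Walk

variable {u v w : V}

theorem IsPath.append {p : G.Walk u v} {q : G.Walk v w} (hp : p.IsPath) (hq : q.IsPath)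
    (h : ∀ x ∈ p.support, x ∈ q.support → x = v) : (p.append q).IsPath := by
  rw [isPath_def, support_append, List.nodup_append']
  refine ⟨hp.support_nodup, hq.support_nodup.tail, fun x hxp hxq => ?_⟩
  have hq' := hq.support_nodup
  rw [← cons_tail_support] at hq'
  exact (List.nodup_cons.mp hq').1 (h x hxp (List.mem_of_mem_tail hxq) ▸ hxq)

def InternallyDisjoint (p q : G.Walk u v) : Prop :=
  ∀ x ∈ p.support, x ∈ q.support → x = u ∨ x = v

theorem InternallyDisjoint.symm {p q : G.Walk u v} (h : p.InternallyDisjoint q) :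
    q.InternallyDisjoint p :=
  fun x hq hp => h x hp hq

theorem IsPath.isCycle_append_reverse {p q : G.Walk u v} (hp : p.IsPath) (hq : q.IsPath)
    (hpq : p.InternallyDisjoint q) (hlen : 1 < p.length) : (p.append q.reverse).IsCycle := by
  refine hp.isCycle_append hq.reverse (fun x hxp hxq => ?_) (Or.inl hlen)
  have hp' := hp.support_nodup
  have hq' := hq.reverse.support_nodup
  rw [← cons_tail_support] at hp' hq'
  rcases hpq x (List.mem_of_mem_tail hxp)
      (by simpa using List.mem_of_mem_tail hxq) with rfl | rfl
  · exact (List.nodup_cons.mp hp').1 hxp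
  · exact (List.nodup_cons.mp hq').1 hxq

theorem IsCycle.exists_isPath_le_two_mul_length {c : G.Walk u u} (hc : c.IsCycle) {a b : V}
    (ha : a ∈ c.support) (hb : b ∈ c.support) (hab : a ≠ b) :
    ∃ p : G.Walk a b, p.IsPath ∧ p.support ⊆ c.support ∧ c.length ≤ 2 * p.length := by
  classical
  set c' := c.rotate a ha
  have hb' : b ∈ c'.support := (mem_support_rotate_iff c a ha).mpr hb
  have hsplit : (c'.takeUntil b hb').append (c'.dropUntil b hb') = c' := c'.take_spec hb'
  have hc' : ((c'.takeUntil b hb').append (c'.dropUntil b hb')).IsCycle := by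
    rw [hsplit]; exact hc.rotate ha
  have hlen : (c'.takeUntil b hb').length + (c'.dropUntil b hb').length = c.length := by
    rw [← length_append, hsplit, length_rotate]
  have hsub : c'.support ⊆ c.support := fun x hx => (mem_support_rotate_iff c a ha).mp hx
  by_cases hlong : c.length ≤ 2 * (c'.takeUntil b hb').length
  · exact ⟨_, hc'.isPath_of_append_left (not_nil_of_ne (Ne.symm hab)), fun x hx =>
      hsub (c'.support_takeUntil_subset_support hb' hx), hlong⟩
  · refine ⟨(c'.dropUntil b hb').reverse,
      (hc'.isPath_of_append_right (not_nil_of_ne hab)).reverse, fun x hx => ?_, by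
        rw [length_reverse]; omega⟩
    rw [support_reverse, List.mem_reverse] at hx
    exact hsub (c'.support_dropUntil_subset_support hb' hx)

theorem IsCycle.support_nontrivial {c : G.Walk u u} (hc : c.IsCycle) :
    {x | x ∈ c.support}.Nontrivial :=
  ⟨u, c.start_mem_support, c.snd, c.getVert_mem_support 1, (c.adj_snd hc.not_nil).ne⟩

structure IsPathBetween (A B : Set V) (p : G.Walk u v) : Prop where
  isPath : p.IsPath
  start_mem : u ∈ A
  end_mem : v ∈ B
  eq_start : ∀ x ∈ p.support, x ∈ A → x = u
  eq_end : ∀ x ∈ p.support, x ∈ B → x = v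

theorem exists_isPathBetween_support_subset {A B : Set V} {a b : V} (p : G.Walk a b)
    (ha : a ∈ A) (hb : b ∈ B) :
    ∃ (a' b' : V) (q : G.Walk a' b'), q.IsPathBetween A B ∧ q.support ⊆ p.support := by
  classical
  obtain ⟨b', hb', hb'p, hfirstB⟩ :=
    p.exists_mem_support_forall_mem_support_imp_eq {x ∈ p.support.toFinset | x ∈ B}
      ⟨b, by simp [hb]⟩
  set p₁ := p.takeUntil b' hb'p
  obtain ⟨a', ha', ha'p, hlastA⟩ :=
    p₁.reverse.exists_mem_support_forall_mem_support_imp_eq {x ∈ p₁.support.toFinset | x ∈ A}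
      ⟨a, by simp [ha]⟩
  set p₂ := (p₁.reverse.takeUntil a' ha'p).reverse
  simp only [Finset.mem_filter, List.mem_toFinset] at hb' hfirstB ha' hlastA
  have hsub₁ : p₁.support ⊆ p.support := p.support_takeUntil_subset_support hb'p
  have hsub₂ : p₂.support ⊆ p₁.support := fun x hx => by
    simpa using (p₁.reverse.support_takeUntil_subset_support ha'p) (by simpa [p₂] using hx)
  have hsub : p₂.bypass.support ⊆ p₂.support := p₂.support_bypass_subset_support
  refine ⟨a', b', p₂.bypass, ⟨p₂.bypass_isPath, ha'.2, hb'.2, fun x hx hxA => ?_,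
    fun x hx hxB => hfirstB x ⟨hsub₁ (hsub₂ (hsub hx)), hxB⟩ (hsub₂ (hsub hx))⟩,
    fun x hx => hsub₁ (hsub₂ (hsub hx))⟩
  exact hlastA x ⟨hsub₂ (hsub hx), hxA⟩ (by simpa [p₂] using hsub hx)

end Walk

open Walk

theorem Connected.of_hom_of_forall_eq_or_adj {W : Type*} {H : SimpleGraph W}
    (hG : G.Connected) (f : G →g H) (h : ∀ y, ∃ x, f x = y ∨ H.Adj (f x) y) : H.Connected := by
  obtain ⟨x₀⟩ := hG.nonempty
  rw [connected_iff_exists_forall_reachable]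
  refine ⟨f x₀, fun y => ?_⟩
  obtain ⟨x, rfl | hxy⟩ := h y
  · exact (hG.preconnected x₀ x).map f
  · exact ((hG.preconnected x₀ x).map f).trans hxy.reachable

theorem connected_of_connected_induce_compl_singleton {w x : V}
    (h : (G.induce {w}ᶜ).Connected) (hwx : G.Adj w x) : G.Connected :=
  h.of_hom_of_forall_eq_or_adj (Embedding.induce _).toHom fun y => by
    by_cases hy : y = w
    · exact ⟨⟨x, hwx.ne.symm⟩, .inr (hy ▸ hwx.symm)⟩
    · exact ⟨⟨y, hy⟩, .inl rfl⟩

theorem exists_isPath_notMem_support_of_connected_induce_compl {w x y : V}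
    (h : (G.induce {w}ᶜ).Connected) (hx : x ≠ w) (hy : y ≠ w) :
    ∃ p : G.Walk x y, p.IsPath ∧ w ∉ p.support := by
  classical
  obtain ⟨q⟩ := h.preconnected ⟨x, Set.mem_compl_singleton_iff.mpr hx⟩
    ⟨y, Set.mem_compl_singleton_iff.mpr hy⟩
  let f := Embedding.induce (G := G) {w}ᶜ
  have hw : w ∉ (q.bypass.map f.toHom).support := by
    rw [Walk.support_map, List.mem_map]
    rintro ⟨z, -, hz⟩
    exact z.2 hz
  exact ⟨_, q.bypass_isPath.map f.injective, hw⟩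

theorem exists_internallyDisjoint_of_adj_of_isPath {u v w z : V} {P₁ P₂ : G.Walk u w}
    (h₁ : P₁.IsPath) (h₂ : P₂.IsPath) (hP : P₁.InternallyDisjoint P₂)
    (hwv : G.Adj w v) (hvu : v ≠ u) {R : G.Walk v z} (hR : R.IsPath)
    (hz : z ∈ P₁.support) (hzw : z ≠ w)
    (hR₁ : ∀ x ∈ R.support, x ∈ P₁.support → x = z)
    (hR₂ : ∀ x ∈ R.support, x ∈ P₂.support → x = z) :
    ∃ p q : G.Walk u v, p.IsPath ∧ q.IsPath ∧ p.InternallyDisjoint q := by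
  classical
  have hwT : w ∉ (P₁.takeUntil z hz).support := fun hw => by
    have hsplit : ((P₁.takeUntil z hz).append (P₁.dropUntil z hz)).IsPath := by
      rwa [take_spec]
    exact hsplit.ne_of_mem_support_of_append hzw.symm hw (end_mem_support _) rfl
  have hzP₂ : z ∈ P₂.support → z = u := fun h => (hP z hz h).resolve_right hzw
  have hvP₂ : v ∉ P₂.support := fun hv => by
    obtain rfl := hR₂ v R.start_mem_support hv
    exact hvu (hzP₂ hv)
  refine ⟨(P₁.takeUntil z hz).append R.reverse, P₂.concat hwv,
    (h₁.takeUntil hz).append hR.reverse fun x hxT hxR => hR₁ x (by simpa using hxR)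
      (P₁.support_takeUntil_subset_support hz hxT),
    h₂.concat hvP₂ hwv, fun x hxp hxq => ?_⟩
  rw [support_concat, List.mem_append, List.mem_singleton] at hxq
  rcases hxq with hxq | rfl
  · left
    rcases (mem_support_append_iff _ _).mp hxp with hxT | hxR
    · exact (hP x (P₁.support_takeUntil_subset_support hz hxT) hxq).resolve_right
        fun h => hwT (h ▸ hxT)
    · obtain rfl := hR₂ x (by simpa using hxR) hxq
      exact hzP₂ hxq
  · exact Or.inr rfl

theorem exists_internallyDisjoint_of_adj {u v w : V} (hG : (G.induce {w}ᶜ).Connected)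
    {P₁ P₂ : G.Walk u w} (h₁ : P₁.IsPath) (h₂ : P₂.IsPath) (hP : P₁.InternallyDisjoint P₂)
    (hwv : G.Adj w v) (hvu : v ≠ u) (huw : u ≠ w) :
    ∃ p q : G.Walk u v, p.IsPath ∧ q.IsPath ∧ p.InternallyDisjoint q := by
  classical
  -- `R` runs from `v` back to `u` avoiding `w`; it is cut at its first vertex on `P₁` or `P₂`.
  obtain ⟨R, hR, hwR⟩ :=
    exists_isPath_notMem_support_of_connected_induce_compl hG hwv.ne.symm huw
  obtain ⟨z, hz, hzR, hfirst⟩ :=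
    R.exists_mem_support_forall_mem_support_imp_eq (P₁.support ++ P₂.support).toFinset
      ⟨u, by simp⟩
  have hzw : z ≠ w := fun h => hwR (h ▸ hzR)
  simp only [List.mem_toFinset, List.mem_append] at hz hfirst
  rcases hz with hz | hz
  · exact exists_internallyDisjoint_of_adj_of_isPath h₁ h₂ hP hwv hvu (hR.takeUntil hzR) hz hzw
      (fun x hxR hx => hfirst x (.inl hx) hxR) (fun x hxR hx => hfirst x (.inr hx) hxR)
  · exact exists_internallyDisjoint_of_adj_of_isPath h₂ h₁ hP.symm hwv hvu (hR.takeUntil hzR) hz hzw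
      (fun x hxR hx => hfirst x (.inr hx) hxR) (fun x hxR hx => hfirst x (.inl hx) hxR)

theorem Reachable.exists_internallyDisjoint (hG : ∀ w, (G.induce {w}ᶜ).Connected) {u v : V}
    (h : G.Reachable u v) (huv : u ≠ v) :
    ∃ p q : G.Walk u v, p.IsPath ∧ q.IsPath ∧ p.InternallyDisjoint q := by
  obtain ⟨r⟩ := h.symm
  clear h
  induction r with
  | nil => exact absurd rfl huv
  | @cons x y u hxy r ih =>
    by_cases hyu : y = u
    · subst hyu
      have hp := IsPath.of_adj hxy.symm
      refine ⟨_, _, hp, hp, fun z hz _ => ?_⟩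
      simpa using hz
    · obtain ⟨P₁, P₂, h₁, h₂, hP⟩ := ih (Ne.symm hyu)
      exact exists_internallyDisjoint_of_adj (hG y) h₁ h₂ hP hxy.symm huv.symm (Ne.symm hyu)

def addApices {ι : Type*} (G : SimpleGraph V) (T : ι → Set V) : SimpleGraph (V ⊕ ι) where
  Adj
    | .inl x, .inl y => G.Adj x y
    | .inl x, .inr i => x ∈ T i
    | .inr i, .inl x => x ∈ T i
    | .inr _, .inr _ => False
  symm := ⟨by rintro (x | i) (y | j) h <;> first | exact h.symm | exact h⟩
  loopless := ⟨by rintro (x | i) h; exacts [G.loopless.irrefl x h, h]⟩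

section addApices

variable {ι : Type*} {T : ι → Set V}

theorem addApices_connected_induce_compl (hG : ∀ w, (G.induce {w}ᶜ).Connected)
    (hconn : G.Connected) (hT : ∀ i w, ∃ x ∈ T i, x ≠ w) (y : V ⊕ ι) :
    ((G.addApices T).induce {y}ᶜ).Connected := by
  obtain ⟨x₀⟩ := hconn.nonempty
  cases y with
  | inl w =>
    refine (hG w).of_hom_of_forall_eq_or_adj
      ⟨fun x => ⟨.inl x, fun h => x.2 (Sum.inl_injective h)⟩, id⟩ ?_
    rintro ⟨x | i, hy⟩
    · exact ⟨⟨x, by simpa using hy⟩, .inl rfl⟩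
    · obtain ⟨x, hxT, hxw⟩ := hT i w
      exact ⟨⟨x, hxw⟩, .inr hxT⟩
  | inr i =>
    refine hconn.of_hom_of_forall_eq_or_adj ⟨fun x => ⟨.inl x, by simp⟩, id⟩ ?_
    rintro ⟨x | j, hy⟩
    · exact ⟨x, .inl rfl⟩
    · obtain ⟨x, hxT, -⟩ := hT j x₀
      exact ⟨x, .inr hxT⟩

theorem addApices.exists_walk_of_walk {j : ι} :
    ∀ {a : V} (p : (G.addApices T).Walk (.inl a) (.inr j)), (∀ k ≠ j, .inr k ∉ p.support) →
      ∃ b ∈ T j, ∃ P : G.Walk a b, ∀ x ∈ P.support, .inl x ∈ p.support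
  | a, .cons (v := .inl c) h p, hp => by
    obtain ⟨b, hb, P, hP⟩ := exists_walk_of_walk p fun k hk hkp => hp k hk (by simp [hkp])
    have hac : G.Adj a c := h
    refine ⟨b, hb, .cons hac P, fun x hx => ?_⟩
    rw [support_cons, List.mem_cons] at hx
    rcases hx with rfl | hx
    · simp
    · simp [hP x hx]
  | a, .cons (v := .inr k) h p, hp => by
    obtain rfl : k = j := by_contra fun hk => hp k hk (by simp)
    exact ⟨a, h, .nil, by simp⟩

end addApices

theorem addApices.exists_walk_of_isPath {T : Bool → Set V}
    {p : (G.addApices T).Walk (.inr false) (.inr true)} (hp : p.IsPath) :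
    ∃ a ∈ T false, ∃ b ∈ T true, ∃ P : G.Walk a b, ∀ x ∈ P.support, .inl x ∈ p.support := by
  cases p with
  | @cons _ y _ h p =>
    cases y with
    | inr k => exact h.elim
    | inl a =>
      rw [cons_isPath_iff] at hp
      obtain ⟨b, hb, P, hP⟩ := exists_walk_of_walk p fun k hk hkp => by
        obtain rfl : k = false := by simpa using hk
        exact hp.2 hkp
      exact ⟨a, h, b, hb, P, fun x hx => by simp [hP x hx]⟩

-- Menger's theorem for two paths, from Whitney's theorem between apices over `A` and over `B`.
theorem exists_disjoint_isPathBetween (hG : ∀ w, (G.induce {w}ᶜ).Connected)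
    (hconn : G.Connected) {A B : Set V} (hA : A.Nontrivial) (hB : B.Nontrivial) :
    ∃ (a₁ b₁ a₂ b₂ : V) (P : G.Walk a₁ b₁) (Q : G.Walk a₂ b₂),
      P.IsPathBetween A B ∧ Q.IsPathBetween A B ∧ P.support.Disjoint Q.support := by
  set T : Bool → Set V := fun i => if i then B else A
  have hT : ∀ i w, ∃ x ∈ T i, x ≠ w := by
    rintro (_ | _) w
    exacts [hA.exists_ne w, hB.exists_ne w]
  have hH := addApices_connected_induce_compl hG hconn hT
  obtain ⟨x₀⟩ := hconn.nonempty
  have hreach : (G.addApices T).Reachable (.inr false) (.inr true) :=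
    ((hH (.inl x₀)).preconnected ⟨.inr false, by simp⟩ ⟨.inr true, by simp⟩).map
      (Embedding.induce _).toHom
  obtain ⟨p, q, hp, hq, hpq⟩ := hreach.exists_internallyDisjoint hH (by simp)
  obtain ⟨a₁, ha₁, b₁, hb₁, P, hP⟩ := addApices.exists_walk_of_isPath hp
  obtain ⟨a₂, ha₂, b₂, hb₂, Q, hQ⟩ := addApices.exists_walk_of_isPath hq
  obtain ⟨a₁', b₁', P', hP', hP'P⟩ := P.exists_isPathBetween_support_subset ha₁ hb₁
  obtain ⟨a₂', b₂', Q', hQ', hQ'Q⟩ := Q.exists_isPathBetween_support_subset ha₂ hb₂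
  refine ⟨_, _, _, _, P', Q', hP', hQ', fun x hxP hxQ => ?_⟩
  simpa using hpq _ (hP _ (hP'P hxP)) (hQ _ (hQ'Q hxQ))

theorem exists_isCycle_of_isPathBetween {u v a₁ b₁ a₂ b₂ : V} {c₁ : G.Walk u u}
    {c₂ : G.Walk v v} (hc₁ : c₁.IsCycle) (hc₂ : c₂.IsCycle)
    (hdisj : ∀ x ∈ c₁.support, x ∉ c₂.support) {P : G.Walk a₁ b₁} {Q : G.Walk a₂ b₂}
    (hP : P.IsPathBetween {x | x ∈ c₁.support} {x | x ∈ c₂.support})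
    (hQ : Q.IsPathBetween {x | x ∈ c₁.support} {x | x ∈ c₂.support})
    (hPQ : P.support.Disjoint Q.support) :
    ∃ (w : V) (c : G.Walk w w), c.IsCycle ∧ c₁.length + c₂.length + 4 ≤ 2 * c.length := by
  have ha : a₁ ≠ a₂ := fun h => hPQ P.start_mem_support (h ▸ Q.start_mem_support)
  have hb : b₁ ≠ b₂ := fun h => hPQ P.end_mem_support (h ▸ Q.end_mem_support)
  obtain ⟨D₁, hD₁, hD₁c, hD₁len⟩ :=
    hc₁.exists_isPath_le_two_mul_length hP.start_mem hQ.start_mem ha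
  obtain ⟨D₂, hD₂, hD₂c, hD₂len⟩ := hc₂.exists_isPath_le_two_mul_length hP.end_mem hQ.end_mem hb
  have hX : (D₁.append Q).IsPath :=
    hD₁.append hQ.isPath fun x hxD hxQ => hQ.eq_start x hxQ (hD₁c hxD)
  have hY : (P.append D₂).IsPath :=
    hP.isPath.append hD₂ fun x hxP hxD => hP.eq_end x hxP (hD₂c hxD)
  have hXY : (D₁.append Q).InternallyDisjoint (P.append D₂) := by
    intro x hx hy
    rw [mem_support_append_iff] at hx hy
    rcases hx with hxD₁ | hxQ <;> rcases hy with hxP | hxD₂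
    · exact .inl (hP.eq_start x hxP (hD₁c hxD₁))
    · exact absurd (hD₂c hxD₂) (hdisj x (hD₁c hxD₁))
    · exact absurd hxQ (hPQ hxP)
    · exact .inr (hQ.eq_end x hxQ (hD₂c hxD₂))
  have hlen : ∀ {a b : V} (R : G.Walk a b), a ∈ c₁.support → b ∈ c₂.support → 0 < R.length :=
    fun R ha hb => not_nil_iff_lt_length.mp (not_nil_of_ne fun h => hdisj _ ha (h ▸ hb))
  have hPlen := hlen P hP.start_mem hP.end_mem
  have hQlen := hlen Q hQ.start_mem hQ.end_mem
  have h₃ := hc₁.three_le_length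
  refine ⟨a₁, (D₁.append Q).append (P.append D₂).reverse,
    hX.isCycle_append_reverse hY hXY (by rw [length_append]; omega), ?_⟩
  simp only [length_append, length_reverse]
  omega

end SimpleGraph

theorem longest_cycles_intersect_in_two_connected_general
    (V : Type) (G : SimpleGraph V)
    -- `G` is 2-connected:
    (hconn : ∀ w : V, (G.induce ({w}ᶜ : Set V)).Connected)
    (u v : V) (c1 : G.Walk u u) (c2 : G.Walk v v)
    (h1 : IsLongestCycle G c1) (h2 : IsLongestCycle G c2) :
    ∃ x : V, x ∈ c1.support ∧ x ∈ c2.support := by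
  by_contra! hdisj
  obtain ⟨hc1, hmax1⟩ := h1
  obtain ⟨hc2, hmax2⟩ := h2
  have hG : G.Connected :=
    connected_of_connected_induce_compl_singleton (hconn u) (c1.adj_snd hc1.not_nil)
  obtain ⟨_, _, _, _, P, Q, hP, hQ, hPQ⟩ :=
    exists_disjoint_isPathBetween hconn hG hc1.support_nontrivial hc2.support_nontrivial
  obtain ⟨w, c, hc, hlen⟩ := exists_isCycle_of_isPathBetween hc1 hc2 hdisj hP hQ hPQ
  have := hmax1 w c hc
  have := hmax2 u c1 hc1
  omega

theorem longest_cycles_intersect_in_two_connected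
    (V : Type) [Fintype V] (G : SimpleGraph V)
    -- `G` is 2-connected:
    (hcard : 2 < Fintype.card V)
    (hconn : ∀ w : V, (G.induce ({w}ᶜ : Set V)).Connected)
    (u v : V) (c1 : G.Walk u u) (c2 : G.Walk v v)
    (h1 : IsLongestCycle G c1) (h2 : IsLongestCycle G c2) :
    ∃ x : V, x ∈ c1.support ∧ x ∈ c2.support :=
  longest_cycles_intersect_in_two_connected_general V G hconn u v c1 c2 h1 h2
end

section
/- Let G be a connected vertex-transitive finite simple graph on n ≥ 3 vertices and let S ⊆ V(G) be a set of vertices that intersects the vertex set of every longest path of G. Then G contains a path P with |S| · |V(P)| ≥ n; in particular, G contains a path of length at least n/|S| − 1. -/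
/-!
Let ℓ be the length of a longest path and count the pairs (v, A) where A is the vertex set of
a longest path and v ∈ A. Vertex-transitivity puts every vertex in the same number d of such
sets, and d > 0 because S meets one of them; each set has ℓ + 1 elements, so
n · d ≤ N · (ℓ + 1), where N is the number of sets. Every set meets S, so N ≤ |S| · d, and
therefore n ≤ |S| · (ℓ + 1).
-/

open SimpleGraph

/-- `p` is a longest path in `G`: it is a path and its length is at least
the length of every path in `G`. -/
def IsLongestPath {V : Type*} (G : SimpleGraph V) {a b : V} (p : G.Walk a b) : Prop :=
  p.IsPath ∧ ∀ (c d : V) (q : G.Walk c d), q.IsPath → q.length ≤ p.length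

open Finset

theorem Fintype.card_le_transversal_card_mul {α : Type*} [Fintype α] [DecidableEq α]
    {𝓛 : Finset (Finset α)} {m : ℕ} (hcard : ∀ A ∈ 𝓛, #A ≤ m)
    (hreg : ∀ u v, #{A ∈ 𝓛 | u ∈ A} ≤ #{A ∈ 𝓛 | v ∈ A})
    {S : Finset α} (hS : ∀ A ∈ 𝓛, ∃ s ∈ S, s ∈ A) (hne : 𝓛.Nonempty) :
    Fintype.card α ≤ #S * m := by
  obtain ⟨A₀, hA₀⟩ := hne
  obtain ⟨s₀, -, hs₀⟩ := hS A₀ hA₀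
  set d := #{A ∈ 𝓛 | s₀ ∈ A}
  have hd : 0 < d := Finset.card_pos.2 ⟨A₀, mem_filter.2 ⟨hA₀, hs₀⟩⟩
  have hcover : #(univ : Finset α) * d ≤ #𝓛 * m :=
    card_mul_le_card_mul (· ∈ ·) (fun v _ => hreg s₀ v)
      (fun A hA => by simpa [bipartiteBelow, filter_univ_mem] using hcard A hA)
  have hhit : #𝓛 * 1 ≤ #S * d :=
    card_mul_le_card_mul (fun A s => s ∈ A)
      (fun A hA =>
        let ⟨s, hs, hsA⟩ := hS A hA
        Finset.one_le_card.2 ⟨s, mem_filter.2 ⟨hs, hsA⟩⟩)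
      (fun s _ => hreg s s₀)
  refine Nat.le_of_mul_le_mul_right ?_ hd
  calc Fintype.card α * d ≤ #𝓛 * m := hcover
    _ ≤ #S * d * m := by gcongr; simpa using hhit
    _ = #S * m * d := by ring

theorem exists_isLongestPath {V : Type*} [Fintype V] [Nonempty V] (G : SimpleGraph V) :
    ∃ (a b : V) (p : G.Walk a b), IsLongestPath G p := by
  set lengths : Set ℕ := {n | ∃ (a b : V) (q : G.Walk a b), q.IsPath ∧ q.length = n}
  have hne : lengths.Nonempty :=
    let v := Classical.arbitrary V
    ⟨0, v, v, Walk.nil, Walk.IsPath.nil, rfl⟩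
  have hbdd : BddAbove lengths :=
    ⟨Fintype.card V, fun _ ⟨_, _, q, hq, hlen⟩ => hlen ▸ hq.length_lt.le⟩
  obtain ⟨a, b, p, hp, hlen⟩ := Nat.sSup_mem hne hbdd
  exact ⟨a, b, p, hp, fun c d q hq => hlen ▸ le_csSup hbdd ⟨c, d, q, hq, rfl⟩⟩

theorem IsLongestPath.length_eq {V : Type*} {G : SimpleGraph V} {a b c d : V}
    {p : G.Walk a b} {q : G.Walk c d} (hp : IsLongestPath G p) (hq : IsLongestPath G q) :
    q.length = p.length :=
  le_antisymm (hp.2 _ _ q hq.1) (hq.2 _ _ p hp.1)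

theorem IsLongestPath.map {V W : Type*} {G : SimpleGraph V} {G' : SimpleGraph W} {a b : V}
    {p : G.Walk a b} (hp : IsLongestPath G p) (φ : G ≃g G') :
    IsLongestPath G' (p.map φ.toHom) := by
  refine ⟨hp.1.map φ.injective, fun c d q hq => ?_⟩
  rw [Walk.length_map, ← Walk.length_map φ.symm.toHom q]
  exact hp.2 _ _ _ (hq.map φ.symm.injective)

theorem SimpleGraph.Walk.IsPath.card_toFinset_support {V : Type*} [DecidableEq V]
    {G : SimpleGraph V} {a b : V} {p : G.Walk a b} (hp : p.IsPath) :
    #p.support.toFinset = p.length + 1 := by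
  rw [List.toFinset_card_of_nodup hp.support_nodup, Walk.length_support]

section LongestPathVertexSets

variable {V : Type*} [Fintype V] [DecidableEq V] (G : SimpleGraph V)

open Classical in
noncomputable def longestPathVertexSets : Finset (Finset V) :=
  {A | ∃ (a b : V) (p : G.Walk a b), IsLongestPath G p ∧ p.support.toFinset = A}

variable {G}

theorem mem_longestPathVertexSets {A : Finset V} :
    A ∈ longestPathVertexSets G ↔
      ∃ (a b : V) (p : G.Walk a b), IsLongestPath G p ∧ p.support.toFinset = A := by
  simp [longestPathVertexSets]

theorem card_le_of_mem_longestPathVertexSets {a b : V} {p : G.Walk a b}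
    (hp : IsLongestPath G p) {A : Finset V} (hA : A ∈ longestPathVertexSets G) :
    #A ≤ p.length + 1 := by
  obtain ⟨_, _, q, hq, rfl⟩ := mem_longestPathVertexSets.1 hA
  rw [hq.1.card_toFinset_support, hp.length_eq hq]

theorem card_filter_mem_longestPathVertexSets_le (φ : G ≃g G) (v : V) :
    #{A ∈ longestPathVertexSets G | v ∈ A} ≤
      #{A ∈ longestPathVertexSets G | φ v ∈ A} := by
  refine card_le_card_of_injOn (image φ) (fun A hA => ?_)
    ((image_injective φ.injective).injOn)
  simp only [coe_filter, Set.mem_ofPred_eq, mem_longestPathVertexSets] at hA ⊢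
  obtain ⟨⟨a, b, p, hp, rfl⟩, hv⟩ := hA
  refine ⟨⟨φ a, φ b, p.map φ.toHom, hp.map φ, ?_⟩, mem_image_of_mem φ hv⟩
  ext
  simp [Walk.support_map]

end LongestPathVertexSets

theorem path_transversal_lower_bound_general
    (V : Type) [Fintype V] (G : SimpleGraph V)
    (htrans : ∀ u v : V, ∃ φ : G ≃g G, φ u = v)
    (hn : 3 ≤ Fintype.card V)
    (S : Finset V)
    -- `S` intersects the vertex set of every longest path of `G`:
    (hS : ∀ (a b : V) (p : G.Walk a b), IsLongestPath G p → ∃ s ∈ S, s ∈ p.support) :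
    ∃ (a b : V) (p : G.Walk a b), p.IsPath ∧
      Fintype.card V ≤ S.card * (p.length + 1) ∧
      (Fintype.card V : ℝ) / (S.card : ℝ) - 1 ≤ (p.length : ℝ) := by
  classical
  have : Nonempty V := Fintype.card_pos_iff.mp (by omega)
  obtain ⟨a, b, p, hp⟩ := exists_isLongestPath G
  have hbound : Fintype.card V ≤ #S * (p.length + 1) := by
    refine Fintype.card_le_transversal_card_mul
      (fun A hA => card_le_of_mem_longestPathVertexSets hp hA) (fun u v => ?_) (fun A hA => ?_)
      ⟨_, mem_longestPathVertexSets.2 ⟨a, b, p, hp, rfl⟩⟩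
    · obtain ⟨φ, rfl⟩ := htrans u v
      exact card_filter_mem_longestPathVertexSets_le φ u
    · obtain ⟨_, _, q, hq, rfl⟩ := mem_longestPathVertexSets.1 hA
      simpa using hS _ _ q hq
  have hSpos : (0 : ℝ) < #S := by
    obtain ⟨s, hs, -⟩ := hS a b p hp
    exact_mod_cast card_pos.2 ⟨s, hs⟩
  refine ⟨a, b, p, hp.1, hbound, ?_⟩
  rw [sub_le_iff_le_add, div_le_iff₀ hSpos]
  exact_mod_cast hbound.trans_eq (mul_comm _ _)

theorem path_transversal_lower_bound
    (V : Type) [Fintype V] (G : SimpleGraph V)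
    (hconn : G.Connected) (htrans : ∀ u v : V, ∃ φ : G ≃g G, φ u = v)
    (hn : 3 ≤ Fintype.card V)
    (S : Finset V)
    -- `S` intersects the vertex set of every longest path of `G`:
    (hS : ∀ (a b : V) (p : G.Walk a b), IsLongestPath G p → ∃ s ∈ S, s ∈ p.support) :
    ∃ (a b : V) (p : G.Walk a b), p.IsPath ∧
      Fintype.card V ≤ S.card * (p.length + 1) ∧
      (Fintype.card V : ℝ) / (S.card : ℝ) - 1 ≤ (p.length : ℝ) :=
  path_transversal_lower_bound_general V G htrans hn S hS
end

section
/- Let G be a connected vertex-transitive finite simple graph on n ≥ 3 vertices and let S ⊆ V(G) be a set of vertices that intersects the vertex set of every longest cycle of G. Then G contains a cycle C with |S| · length(C) ≥ n; in particular, G contains a cycle of length at least n/|S|. -/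
open SimpleGraph

/-!
Let `C` be a longest cycle. Every automorphism maps `C` to a longest cycle, which therefore
meets `S`. Since the automorphism group `Γ` acts transitively, for fixed vertices `w, s` exactly
`|Γ| / n` automorphisms send `w` to `s`, so
`|Γ| ≤ ∑_{g ∈ Γ} |{w ∈ C | g w ∈ S}| = |C| |S| |Γ| / n`.
A longest cycle exists because a connected regular graph on at least three vertices is not a tree.
-/

open Finset

section TransitiveAction

variable {Γ X : Type*} [Group Γ] [MulAction Γ X] [MulAction.IsPretransitive Γ X] [DecidableEq X]

theorem card_filter_smul_eq_eq_of_isPretransitive [Fintype Γ] (a b a' b' : X) :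
    #{g : Γ | g • a = b} = #{g : Γ | g • a' = b'} := by
  obtain ⟨h, rfl⟩ := MulAction.exists_smul_eq Γ a' a
  obtain ⟨k, rfl⟩ := MulAction.exists_smul_eq Γ b b'
  refine card_nbij' (fun g => k * g * h) (fun g => k⁻¹ * g * h⁻¹) ?_ ?_ ?_ ?_ <;>
    intro g hg <;> simp_all [mul_smul, mul_assoc]

variable [Fintype X]

theorem card_mul_card_filter_smul_eq [Fintype Γ] (a b : X) :
    Fintype.card X * #{g : Γ | g • a = b} = Fintype.card Γ := by
  calc Fintype.card X * #{g : Γ | g • a = b}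
      = ∑ x : X, #{g : Γ | g • a = x} := by
        rw [sum_congr rfl fun x _ => card_filter_smul_eq_eq_of_isPretransitive a x a b,
          sum_const, card_univ, smul_eq_mul]
    _ = Fintype.card Γ := (card_eq_sum_card_fiberwise fun g _ => mem_univ (g • a)).symm

theorem card_mul_card_filter_smul_mem [Fintype Γ] (a : X) (S : Finset X) :
    Fintype.card X * #{g : Γ | g • a ∈ S} = #S * Fintype.card Γ := by
  rw [← sum_card_fiberwise_eq_card_filter, mul_sum,
    sum_congr rfl fun b _ => card_mul_card_filter_smul_eq a b, sum_const, smul_eq_mul]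

theorem card_mul_sum_card_filter_smul_mem [Fintype Γ] (W S : Finset X) :
    Fintype.card X * ∑ g : Γ, #{w ∈ W | g • w ∈ S} = #W * #S * Fintype.card Γ := by
  have hswap : ∑ g : Γ, #{w ∈ W | g • w ∈ S} = ∑ w ∈ W, #{g : Γ | g • w ∈ S} :=
    sum_card_bipartiteAbove_eq_sum_card_bipartiteBelow (r := fun g w => g • w ∈ S)
  rw [hswap, mul_sum, sum_congr rfl fun w _ => card_mul_card_filter_smul_mem w S, sum_const,
    smul_eq_mul, mul_assoc]

theorem card_le_card_mul_card_of_forall_exists_smul_mem [Finite Γ] {W S : Finset X}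
    (hS : ∀ g : Γ, ∃ w ∈ W, g • w ∈ S) : Fintype.card X ≤ #W * #S := by
  have := Fintype.ofFinite Γ
  have hΓ : Fintype.card Γ ≤ ∑ g : Γ, #{w ∈ W | g • w ∈ S} := by
    calc Fintype.card Γ = ∑ _g : Γ, 1 := by simp
      _ ≤ _ := sum_le_sum fun g _ => card_pos.mpr <| by simpa [Finset.Nonempty] using hS g
  refine le_of_mul_le_mul_right ?_ (Fintype.card_pos (α := Γ))
  calc Fintype.card X * Fintype.card Γ
      ≤ Fintype.card X * ∑ g : Γ, #{w ∈ W | g • w ∈ S} := Nat.mul_le_mul_left _ hΓ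
    _ = #W * #S * Fintype.card Γ := card_mul_sum_card_filter_smul_mem W S

end TransitiveAction

namespace SimpleGraph

variable {V : Type*} {G : SimpleGraph V}

theorem Walk.IsCycle.length_le_card [Fintype V] {v : V} {c : G.Walk v v} (hc : c.IsCycle) :
    c.length ≤ Fintype.card V := by
  have := hc.support_nodup.length_le_card
  rw [List.length_tail, Walk.length_support] at this
  omega

theorem Walk.IsCycle.card_support_toFinset [DecidableEq V] {v : V} {c : G.Walk v v}
    (hc : c.IsCycle) : #c.support.toFinset = c.length := by
  have hsupp : c.support.toFinset = c.support.tail.toFinset := by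
    conv_lhs => rw [← c.cons_tail_support, List.toFinset_cons]
    refine insert_eq_of_mem ?_
    exact List.mem_toFinset.mpr (c.end_mem_tail_support hc.not_nil)
  rw [hsupp, List.toFinset_card_of_nodup hc.support_nodup, List.length_tail,
    Walk.length_support, Nat.add_sub_cancel]

theorem not_isAcyclic_of_isRegularOfDegree [Fintype V] [DecidableRel G.Adj] {d : ℕ}
    (hconn : G.Connected) (hreg : G.IsRegularOfDegree d) (hcard : 3 ≤ Fintype.card V) :
    ¬G.IsAcyclic := by
  intro hacyc
  have htree : G.IsTree := ⟨hconn, hacyc⟩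
  have : Nontrivial V := Fintype.one_lt_card_iff_nontrivial.mp (by omega)
  obtain ⟨v, hv⟩ := htree.exists_vert_degree_one_of_nontrivial
  have hsum := G.sum_degrees_eq_twice_card_edges
  rw [sum_congr rfl fun u _ => hreg.degree_eq u, ← hreg.degree_eq v, hv, sum_const, card_univ,
    smul_eq_mul] at hsum
  have := htree.card_edgeFinset
  omega

theorem isRegularOfDegree_of_isPretransitive [Fintype V] [DecidableRel G.Adj]
    [MulAction.IsPretransitive (G ≃g G) V] (v : V) : G.IsRegularOfDegree (G.degree v) := by
  intro u
  obtain ⟨φ, rfl⟩ := MulAction.exists_smul_eq (G ≃g G) v u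
  exact φ.degree_eq v

theorem not_isAcyclic_of_isPretransitive [Fintype V] [MulAction.IsPretransitive (G ≃g G) V]
    (hconn : G.Connected) (hcard : 3 ≤ Fintype.card V) : ¬G.IsAcyclic := by
  classical
  obtain ⟨v⟩ := hconn.nonempty
  exact not_isAcyclic_of_isRegularOfDegree hconn (isRegularOfDegree_of_isPretransitive v) hcard

instance [Finite V] : Finite (G ≃g G) :=
  Finite.of_injective _ (RelIso.toEquiv_injective (r := G.Adj) (s := G.Adj))

end SimpleGraph

theorem exists_isLongestCycle {V : Type*} {G : SimpleGraph V} [Finite V] (hG : ¬G.IsAcyclic) :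
    ∃ (v : V) (c : G.Walk v v), IsLongestCycle G c := by
  have := Fintype.ofFinite V
  classical
  let P : ℕ → Prop := fun l => ∃ (v : V) (c : G.Walk v v), c.IsCycle ∧ c.length = l
  have hP : ∀ (v : V) (c : G.Walk v v), c.IsCycle →
      c.length ≤ Nat.findGreatest P (Fintype.card V) :=
    fun v c hc => Nat.le_findGreatest hc.length_le_card ⟨v, c, hc, rfl⟩
  obtain ⟨v₀, c₀, hc₀⟩ : ∃ (v : V) (c : G.Walk v v), c.IsCycle := by
    simpa [IsAcyclic] using hG
  obtain ⟨v, c, hc, hlen⟩ :=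
    Nat.findGreatest_spec (P := P) hc₀.length_le_card ⟨v₀, c₀, hc₀, rfl⟩
  exact ⟨v, c, hc, fun u c' hc' => hlen ▸ hP u c' hc'⟩

theorem IsLongestCycle.map_iso {V W : Type*} {G : SimpleGraph V} {G' : SimpleGraph W} {v : V}
    {c : G.Walk v v} (hc : IsLongestCycle G c) (φ : G ≃g G') :
    IsLongestCycle G' (c.map φ.toHom) := by
  refine ⟨hc.1.map φ.injective, fun u c' hc' => ?_⟩
  rw [Walk.length_map, ← Walk.length_map φ.symm.toHom c']
  exact hc.2 _ _ (hc'.map φ.symm.injective)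

theorem cycle_transversal_lower_bound
    (V : Type) [Fintype V] (G : SimpleGraph V)
    (hconn : G.Connected) (htrans : ∀ u v : V, ∃ φ : G ≃g G, φ u = v)
    (hn : 3 ≤ Fintype.card V)
    (S : Finset V)
    -- `S` intersects the vertex set of every longest cycle of `G`:
    (hS : ∀ (v : V) (c : G.Walk v v), IsLongestCycle G c → ∃ s ∈ S, s ∈ c.support) :
    ∃ (v : V) (c : G.Walk v v), c.IsCycle ∧
      Fintype.card V ≤ S.card * c.length ∧
      (Fintype.card V : ℝ) / (S.card : ℝ) ≤ (c.length : ℝ) := by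
  classical
  have : MulAction.IsPretransitive (G ≃g G) V := ⟨htrans⟩
  obtain ⟨v, c, hc⟩ := exists_isLongestCycle (not_isAcyclic_of_isPretransitive hconn hn)
  have hmeet : ∀ φ : G ≃g G, ∃ w ∈ c.support.toFinset, φ • w ∈ S := fun φ => by
    obtain ⟨s, hsS, hs⟩ := hS _ _ (hc.map_iso φ)
    obtain ⟨w, hw, rfl⟩ := List.mem_map.mp (by simpa only [Walk.support_map] using hs)
    exact ⟨w, List.mem_toFinset.mpr hw, hsS⟩
  have hbound : Fintype.card V ≤ S.card * c.length := by
    simpa only [hc.1.card_support_toFinset, mul_comm]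
      using card_le_card_mul_card_of_forall_exists_smul_mem hmeet
  obtain ⟨s, hs, -⟩ := hS v c hc
  have hSpos : (0 : ℝ) < S.card := by exact_mod_cast card_pos.mpr ⟨s, hs⟩
  refine ⟨v, c, hc.1, hbound, ?_⟩
  rw [div_le_iff₀ hSpos, mul_comm]
  exact_mod_cast hbound
end
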